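/- Let a>0, b>0, c≥0, g0>0 and let f0, f1 be the MTTP vector fields on ℝ⁴. Then for every x = (x1,x2,x3,x4) ∈ ℝ⁴, the iterated Lie bracket [f1, ad³f0.f1](x) = [f1,[f0,[f0,[f0,f1]]]](x) equals (−a b² cos x3, −a b² sin x3, 0, 0). -/

import Mathlib

/-- The drift vector field of the MTTP system on ℝ⁴. -/
noncomputable def mttpF0 (a c g0 : ℝ) : (Fin 4 → ℝ) → (Fin 4 → ℝ) :=
  fun x => ![a * Real.cos (x 2) - c * x 0 * x 1,
             a * Real.sin (x 2) + c * (x 0) ^ 2 - g0,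
             x 3 - c * x 0,
             0]

/-- The control vector field of the MTTP system on ℝ⁴. -/
def mttpF1 (b : ℝ) : (Fin 4 → ℝ) → (Fin 4 → ℝ) :=
  fun _ => ![0, 0, 0, b]

/-- Lie bracket of vector fields on ℝ⁴: [f,g](x) = Dg(x)·f(x) − Df(x)·g(x). -/
noncomputable def lieBracket4 (f g : (Fin 4 → ℝ) → (Fin 4 → ℝ)) :
    (Fin 4 → ℝ) → (Fin 4 → ℝ) :=
  fun x => fderiv ℝ g x (f x) - fderiv ℝ f x (g x)

/-!
Brackets with a constant field are directional derivatives: `[f, v] = -Df·v` and `[v, g] = Dg·v`.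
Hence `ad f0.f1 = -b ∂₄f0 = -b e₃` and `ad² f0.f1 = b ∂₃f0`, which depends on `x₃` only. In
`ad³ f0.f1 = D(ad² f0.f1)·f0 - Df0·(ad² f0.f1)` the variable `x₄` enters only through the third
component `x₄ - c x₁` of `f0`, so `[f1, ad³ f0.f1] = b ∂₄(ad³ f0.f1) = b ∂₃(ad² f0.f1) = b² ∂₃²f0`.
-/

lemma hasFDerivAt_vec4 {𝕜 E : Type*} [NontriviallyNormedField 𝕜] [NormedAddCommGroup E]
    [NormedSpace 𝕜 E] {φ₀ φ₁ φ₂ φ₃ : E → 𝕜} {D₀ D₁ D₂ D₃ : E →L[𝕜] 𝕜} {x : E}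
    (h₀ : HasFDerivAt φ₀ D₀ x) (h₁ : HasFDerivAt φ₁ D₁ x)
    (h₂ : HasFDerivAt φ₂ D₂ x) (h₃ : HasFDerivAt φ₃ D₃ x) :
    HasFDerivAt (fun x => ![φ₀ x, φ₁ x, φ₂ x, φ₃ x])
      (ContinuousLinearMap.pi ![D₀, D₁, D₂, D₃]) x := by
  have hφ : (fun x => ![φ₀ x, φ₁ x, φ₂ x, φ₃ x]) = fun x i => ![φ₀, φ₁, φ₂, φ₃] i x := by
    funext x i
    fin_cases i <;> rfl
  rw [hφ]
  exact hasFDerivAt_pi.2 fun i => by fin_cases i <;> assumption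

lemma lieBracket4_const_left (v : Fin 4 → ℝ) (g : (Fin 4 → ℝ) → (Fin 4 → ℝ)) (x : Fin 4 → ℝ) :
    lieBracket4 (fun _ => v) g x = fderiv ℝ g x v := by
  simp [lieBracket4]

lemma lieBracket4_const_right (f : (Fin 4 → ℝ) → (Fin 4 → ℝ)) (v : Fin 4 → ℝ) (x : Fin 4 → ℝ) :
    lieBracket4 f (fun _ => v) x = -fderiv ℝ f x v := by
  simp [lieBracket4]

lemma fderiv_mttpF0_apply (a c g0 : ℝ) (x v : Fin 4 → ℝ) :
    fderiv ℝ (mttpF0 a c g0) x v =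
      ![-(a * Real.sin (x 2)) * v 2 - c * (x 0 * v 1 + x 1 * v 0),
        a * Real.cos (x 2) * v 2 + 2 * c * x 0 * v 0,
        v 3 - c * v 0,
        0] := by
  have e := fun i => hasFDerivAt_apply (𝕜 := ℝ) i x
  have hF0 : HasFDerivAt (mttpF0 a c g0) _ x := hasFDerivAt_vec4
    ((((e 2).cos).const_mul a).sub (((e 0).const_mul c).mul (e 1)))
    ((((e 2).sin.const_mul a).add (((e 0).pow 2).const_mul c)).sub_const g0)
    ((e 3).sub ((e 0).const_mul c))
    (hasFDerivAt_const 0 x)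
  rw [hF0.fderiv]
  funext i
  fin_cases i <;> simp <;> ring

noncomputable def mttpAd2 (a b : ℝ) : (Fin 4 → ℝ) → (Fin 4 → ℝ) :=
  fun x => ![-(a * b) * Real.sin (x 2), a * b * Real.cos (x 2), 0, 0]

noncomputable def mttpAd3 (a b c : ℝ) : (Fin 4 → ℝ) → (Fin 4 → ℝ) :=
  fun x => ![a * b * ((2 * c * x 0 - x 3) * Real.cos (x 2) - c * x 1 * Real.sin (x 2)),
             a * b * ((3 * c * x 0 - x 3) * Real.sin (x 2)),
             -(a * b * c) * Real.sin (x 2),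
             0]

lemma fderiv_mttpAd2_apply (a b : ℝ) (x v : Fin 4 → ℝ) :
    fderiv ℝ (mttpAd2 a b) x v =
      ![-(a * b) * Real.cos (x 2) * v 2, -(a * b) * Real.sin (x 2) * v 2, 0, 0] := by
  have e := fun i => hasFDerivAt_apply (𝕜 := ℝ) i x
  have hAd2 : HasFDerivAt (mttpAd2 a b) _ x := hasFDerivAt_vec4
    ((e 2).sin.const_mul (-(a * b))) ((e 2).cos.const_mul (a * b))
    (hasFDerivAt_const 0 x) (hasFDerivAt_const 0 x)
  rw [hAd2.fderiv]
  funext i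
  fin_cases i <;> simp <;> ring

lemma fderiv_mttpAd3_apply (a b c : ℝ) (x v : Fin 4 → ℝ) :
    fderiv ℝ (mttpAd3 a b c) x v =
      ![a * b * (2 * c * Real.cos (x 2) * v 0 - c * Real.sin (x 2) * v 1
          - ((2 * c * x 0 - x 3) * Real.sin (x 2) + c * x 1 * Real.cos (x 2)) * v 2
          - Real.cos (x 2) * v 3),
        a * b * (3 * c * Real.sin (x 2) * v 0 + (3 * c * x 0 - x 3) * Real.cos (x 2) * v 2
          - Real.sin (x 2) * v 3),
        -(a * b * c) * Real.cos (x 2) * v 2,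
        0] := by
  have e := fun i => hasFDerivAt_apply (𝕜 := ℝ) i x
  have hAd3 : HasFDerivAt (mttpAd3 a b c) _ x := hasFDerivAt_vec4
    (((((e 0).const_mul (2 * c)).sub (e 3)).mul (e 2).cos).sub
      (((e 1).const_mul c).mul (e 2).sin) |>.const_mul (a * b))
    (((((e 0).const_mul (3 * c)).sub (e 3)).mul (e 2).sin).const_mul (a * b))
    ((e 2).sin.const_mul (-(a * b * c)))
    (hasFDerivAt_const 0 x)
  rw [hAd3.fderiv]
  funext i
  fin_cases i <;> simp [-mul_eq_mul_left_iff] <;> ring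

lemma lieBracket4_mttpF0_mttpF1 (a b c g0 : ℝ) :
    lieBracket4 (mttpF0 a c g0) (mttpF1 b) = fun _ => ![0, 0, -b, 0] := by
  funext x
  unfold mttpF1
  rw [lieBracket4_const_right, fderiv_mttpF0_apply]
  funext i
  fin_cases i <;> simp

lemma lieBracket4_mttpF0_const (a b c g0 : ℝ) :
    lieBracket4 (mttpF0 a c g0) (fun _ => ![0, 0, -b, 0]) = mttpAd2 a b := by
  funext x
  rw [lieBracket4_const_right, fderiv_mttpF0_apply]
  funext i
  fin_cases i <;> simp [mttpAd2] <;> ring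

lemma lieBracket4_mttpF0_mttpAd2 (a b c g0 : ℝ) :
    lieBracket4 (mttpF0 a c g0) (mttpAd2 a b) = mttpAd3 a b c := by
  funext x
  rw [lieBracket4, fderiv_mttpAd2_apply, fderiv_mttpF0_apply]
  funext i
  fin_cases i <;> simp [mttpF0, mttpAd2, mttpAd3] <;> ring

theorem stmt5_general (a b c g0 : ℝ) (x : Fin 4 → ℝ) :
    lieBracket4 (mttpF1 b)
        (lieBracket4 (mttpF0 a c g0)
          (lieBracket4 (mttpF0 a c g0) (lieBracket4 (mttpF0 a c g0) (mttpF1 b)))) x =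
      ![-(a * b ^ 2) * Real.cos (x 2), -(a * b ^ 2) * Real.sin (x 2), 0, 0] := by
  rw [lieBracket4_mttpF0_mttpF1, lieBracket4_mttpF0_const, lieBracket4_mttpF0_mttpAd2]
  unfold mttpF1
  rw [lieBracket4_const_left, fderiv_mttpAd3_apply]
  funext i
  fin_cases i <;> simp <;> ring

theorem stmt5 (a b c g0 : ℝ) (ha : 0 < a) (hb : 0 < b) (hc : 0 ≤ c) (hg0 : 0 < g0)
    (x : Fin 4 → ℝ) :
    lieBracket4 (mttpF1 b)
        (lieBracket4 (mttpF0 a c g0)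
          (lieBracket4 (mttpF0 a c g0) (lieBracket4 (mttpF0 a c g0) (mttpF1 b)))) x =
      ![-(a * b ^ 2) * Real.cos (x 2), -(a * b ^ 2) * Real.sin (x 2), 0, 0] :=
  stmt5_general a b c g0 x
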